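/- arXiv:1403.5743 — 5 statements merged into one kernel-verified Lean document; each statement's English description precedes it below -/
import Mathlib

section
/- Let b : ℝ → ℝ be a decreasing Lipschitz continuous function with b(0) = 0, and define F(x) = -∫_𝒪 ∫₀^{x(ξ)} b(η) dη dξ for x ∈ L²(𝒪). Then F(0) = 0, F(x) ≥ 0 for all x ∈ L²(𝒪), and the Fréchet derivative DF satisfies DF(x)(ξ) = -b(x(ξ)), so that ⟨DF(x), x⟩ = -∫_𝒪 b(x(ξ)) x(ξ) dξ ≥ 0 for all x ∈ L²(𝒪). -/
/-!
With `Φ u = ∫₀ᵘ b`, we have `F x = -∫ Φ (x ξ) dξ`. As `b` is antitone with `b 0 = 0`, both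
`b u * u` and `Φ u` are nonpositive, which gives the two sign conditions. As `b` is `K`-Lipschitz,
`Φ (u + v) - Φ u - b u * v = ∫ᵤ^{u+v} (b t - b u) dt` is bounded by `K v²`; integrating this
pointwise bound over `Ω` bounds the first-order remainder of `F` at `x` in direction `h` by
`K ‖h‖²`, so the gradient is the Nemytskii image `-b ∘ x`, which lies in `L²` since `|b u| ≤ K |u|`.
-/

open MeasureTheory

section

open Filter Asymptotics Set

theorem hasGradientAt_of_abs_sub_sub_inner_le_sq {E : Type*} [NormedAddCommGroup E]
    [InnerProductSpace ℝ E] [CompleteSpace E] {f : E → ℝ} {g x : E} {C : ℝ}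
    (hf : ∀ v, |f (x + v) - f x - inner ℝ g v| ≤ C * ‖v‖ ^ 2) : HasGradientAt f g x := by
  refine hasGradientAt_iff_isLittleO_nhds_zero.2 <|
    IsBigO.trans_isLittleO (IsBigO.of_bound C (Eventually.of_forall fun v => ?_))
      (isLittleO_norm_pow_id one_lt_two)
  simpa only [Real.norm_eq_abs, norm_pow, abs_norm] using hf v

namespace LipschitzWith

variable {φ : ℝ → ℝ} {K : NNReal}

theorem abs_integral_sub_mul_le (hφ : LipschitzWith K φ) (u v : ℝ) :
    |(∫ t in u..u + v, φ t) - φ u * v| ≤ K * v ^ 2 := by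
  have hint := hφ.continuous.intervalIntegrable (μ := volume) u (u + v)
  have hrem : (∫ t in u..u + v, φ t) - φ u * v = ∫ t in u..u + v, (φ t - φ u) := by
    rw [intervalIntegral.integral_sub hint intervalIntegrable_const,
      intervalIntegral.integral_const, add_sub_cancel_left, smul_eq_mul, mul_comm]
  have hbound : ∀ t ∈ uIoc u (u + v), ‖φ t - φ u‖ ≤ K * |v| := fun t ht =>
    calc ‖φ t - φ u‖ ≤ K * |t - u| := by
          simpa only [Real.dist_eq, Real.norm_eq_abs] using hφ.dist_le_mul t u
      _ ≤ K * |v| := mul_le_mul_of_nonneg_left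
        (by simpa using abs_sub_left_of_mem_uIcc (uIoc_subset_uIcc ht)) K.coe_nonneg
  calc |(∫ t in u..u + v, φ t) - φ u * v| ≤ K * |v| * |u + v - u| := by
        rw [hrem]; exact intervalIntegral.norm_integral_le_of_norm_le_const hbound
    _ = K * v ^ 2 := by rw [add_sub_cancel_left, mul_assoc, abs_mul_abs_self, sq]

theorem abs_primitive_sub_sub_le (hφ : LipschitzWith K φ) (u v : ℝ) :
    |(∫ t in 0..u + v, φ t) - (∫ t in 0..u, φ t) - φ u * v| ≤ K * v ^ 2 := by
  rw [intervalIntegral.integral_interval_sub_left (hφ.continuous.intervalIntegrable _ _)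
    (hφ.continuous.intervalIntegrable _ _)]
  exact hφ.abs_integral_sub_mul_le u v

theorem abs_primitive_le (hφ : LipschitzWith K φ) (hφ0 : φ 0 = 0) (u : ℝ) :
    |∫ t in 0..u, φ t| ≤ K * u ^ 2 := by
  simpa [hφ0] using hφ.abs_integral_sub_mul_le 0 u

end LipschitzWith

namespace Antitone

variable {b : ℝ → ℝ}

theorem mul_nonpos_of_map_zero (hb : Antitone b) (hb0 : b 0 = 0) (u : ℝ) : b u * u ≤ 0 := by
  rcases le_total 0 u with hu | hu
  · exact mul_nonpos_of_nonpos_of_nonneg (hb0 ▸ hb hu) hu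
  · exact mul_nonpos_of_nonneg_of_nonpos (hb0 ▸ hb hu) hu

theorem primitive_nonpos_of_map_zero (hb : Antitone b) (hb0 : b 0 = 0) (u : ℝ) :
    ∫ t in 0..u, b t ≤ 0 := by
  rcases le_total 0 u with hu | hu
  · have := intervalIntegral.integral_nonneg (μ := volume) hu fun t ht =>
      neg_nonneg.2 (hb0 ▸ hb ht.1)
    rwa [intervalIntegral.integral_neg, neg_nonneg] at this
  · rw [intervalIntegral.integral_symm, neg_nonpos]
    exact intervalIntegral.integral_nonneg hu fun t ht => hb0 ▸ hb ht.2

end Antitone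

variable {Ω : Type*} [MeasurableSpace Ω] {μ : Measure Ω}

namespace MeasureTheory.L2

theorem real_inner_eq_integral_mul {g : Lp ℝ 2 μ} {f : Ω → ℝ} (hg : g =ᵐ[μ] f) (y : Lp ℝ 2 μ) :
    inner ℝ g y = ∫ ξ, f ξ * y ξ ∂μ := by
  rw [inner_def]
  refine integral_congr_ae ?_
  filter_upwards [hg] with ξ hξ
  rw [hξ, real_inner_eq_re_inner, RCLike.inner_apply, conj_trivial, mul_comm]
  rfl

theorem integrable_mul_of_ae_eq {g : Lp ℝ 2 μ} {f : Ω → ℝ} (hg : g =ᵐ[μ] f) (y : Lp ℝ 2 μ) :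
    Integrable (fun ξ => f ξ * y ξ) μ := by
  refine (integrable_inner (𝕜 := ℝ) g y).congr ?_
  filter_upwards [hg] with ξ hξ
  rw [hξ, real_inner_eq_re_inner, RCLike.inner_apply, conj_trivial, mul_comm]
  rfl

theorem norm_sq_eq_integral_sq (y : Lp ℝ 2 μ) : ‖y‖ ^ 2 = ∫ ξ, y ξ ^ 2 ∂μ := by
  rw [← real_inner_self_eq_norm_sq, real_inner_eq_integral_mul (ae_eq_refl _)]
  simp only [sq]

end MeasureTheory.L2

theorem hasGradientAt_integral_comp {Φ φ : ℝ → ℝ} {C : ℝ}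
    (hΦ : ∀ y : Lp ℝ 2 μ, Integrable (fun ξ => Φ (y ξ)) μ)
    (hΦφ : ∀ u v, |Φ (u + v) - Φ u - φ u * v| ≤ C * v ^ 2)
    {g x : Lp ℝ 2 μ} (hg : g =ᵐ[μ] fun ξ => φ (x ξ)) :
    HasGradientAt (fun y : Lp ℝ 2 μ => ∫ ξ, Φ (y ξ) ∂μ) g x := by
  refine hasGradientAt_of_abs_sub_sub_inner_le_sq (C := C) fun v => ?_
  have hxv : ∫ ξ, Φ ((x + v) ξ) ∂μ = ∫ ξ, Φ (x ξ + v ξ) ∂μ :=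
    integral_congr_ae (by filter_upwards [Lp.coeFn_add x v] with ξ hξ; rw [hξ]; rfl)
  have hΦxv : Integrable (fun ξ => Φ (x ξ + v ξ)) μ :=
    (hΦ (x + v)).congr (by filter_upwards [Lp.coeFn_add x v] with ξ hξ; rw [hξ]; rfl)
  have hrem : ∫ ξ, Φ ((x + v) ξ) ∂μ - ∫ ξ, Φ (x ξ) ∂μ - inner ℝ g v
      = ∫ ξ, (Φ (x ξ + v ξ) - Φ (x ξ) - φ (x ξ) * v ξ) ∂μ := by
    rw [hxv, L2.real_inner_eq_integral_mul hg, ← integral_sub hΦxv (hΦ x)]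
    exact (integral_sub (hΦxv.sub (hΦ x)) (L2.integrable_mul_of_ae_eq hg v)).symm
  calc |∫ ξ, Φ ((x + v) ξ) ∂μ - ∫ ξ, Φ (x ξ) ∂μ - inner ℝ g v|
      ≤ ∫ ξ, |Φ (x ξ + v ξ) - Φ (x ξ) - φ (x ξ) * v ξ| ∂μ := by
        rw [hrem]; exact abs_integral_le_integral_abs
    _ ≤ ∫ ξ, C * v ξ ^ 2 ∂μ :=
        integral_mono_of_nonneg (Eventually.of_forall fun _ => abs_nonneg _)
          ((Lp.memLp v).integrable_sq.const_mul C) (Eventually.of_forall fun ξ => hΦφ _ _)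
    _ = C * ‖v‖ ^ 2 := by rw [integral_const_mul, L2.norm_sq_eq_integral_sq]

namespace LipschitzWith

variable {φ : ℝ → ℝ} {K : NNReal}

theorem integrable_primitive_comp (hφ : LipschitzWith K φ) (hφ0 : φ 0 = 0) {f : Ω → ℝ}
    (hf : MemLp f 2 μ) : Integrable (fun ξ => ∫ t in 0..f ξ, φ t) μ :=
  hf.integrable_sq.const_mul K |>.mono
    ((intervalIntegral.continuous_primitive hφ.continuous.intervalIntegrable 0)
      |>.comp_aestronglyMeasurable hf.aestronglyMeasurable)
    (Eventually.of_forall fun ξ => (hφ.abs_primitive_le hφ0 (f ξ)).trans (le_abs_self _))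

theorem hasGradientAt_integral_primitive (hφ : LipschitzWith K φ) (hφ0 : φ 0 = 0)
    (x : Lp ℝ 2 μ) :
    HasGradientAt (fun y : Lp ℝ 2 μ => ∫ ξ, (∫ t in 0..y ξ, φ t) ∂μ) (hφ.compLp hφ0 x) x :=
  hasGradientAt_integral_comp (Φ := fun u => ∫ t in 0..u, φ t)
    (fun y => hφ.integrable_primitive_comp hφ0 (Lp.memLp y)) hφ.abs_primitive_sub_sub_le
    (hφ.coeFn_compLp hφ0 x)

end LipschitzWith

end

theorem stmt0_general
    {Ω : Type*} [MeasurableSpace Ω] (μ : Measure Ω)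
    (b : ℝ → ℝ) (K : NNReal) (hb_lip : LipschitzWith K b)
    (hb_mono : Antitone b) (hb0 : b 0 = 0)
    (F : Lp ℝ 2 μ → ℝ)
    (hF : ∀ x : Lp ℝ 2 μ, F x = -∫ ξ, (∫ t in (0:ℝ)..(x ξ), b t) ∂μ) :
    F 0 = 0 ∧ (∀ x, 0 ≤ F x) ∧
    ∀ x : Lp ℝ 2 μ, ∃ g : Lp ℝ 2 μ,
      (g : Ω → ℝ) =ᵐ[μ] (fun ξ => -(b (x ξ))) ∧
      HasGradientAt F g x ∧
      (inner ℝ g x : ℝ) = -∫ ξ, b (x ξ) * x ξ ∂μ ∧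
      (0:ℝ) ≤ (inner ℝ g x : ℝ) := by
  have hnb0 : (-b) 0 = 0 := by simp [hb0]
  have hF_eq : F = fun y : Lp ℝ 2 μ => ∫ ξ, (∫ t in (0:ℝ)..y ξ, (-b) t) ∂μ := by
    funext y
    simp only [hF, Pi.neg_apply, intervalIntegral.integral_neg, integral_neg]
  refine ⟨?_, fun x => ?_, fun x => ?_⟩
  · rw [hF, neg_eq_zero]
    refine integral_eq_zero_of_ae ?_
    filter_upwards [Lp.coeFn_zero ℝ 2 μ] with ξ hξ
    rw [hξ, Pi.zero_apply, intervalIntegral.integral_same]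
  · rw [hF, neg_nonneg]
    exact integral_nonpos fun ξ => hb_mono.primitive_nonpos_of_map_zero hb0 _
  · have hg := hb_lip.neg.coeFn_compLp hnb0 x
    have hinner : inner ℝ (hb_lip.neg.compLp hnb0 x) x = -∫ ξ, b (x ξ) * x ξ ∂μ := by
      rw [L2.real_inner_eq_integral_mul hg, ← integral_neg]
      simp only [Function.comp_apply, Pi.neg_apply, neg_mul]
    refine ⟨_, hg, hF_eq ▸ hb_lip.neg.hasGradientAt_integral_primitive hnb0 x, hinner, ?_⟩
    rw [hinner, ← integral_neg]
    exact integral_nonneg fun ξ => neg_nonneg.2 (hb_mono.mul_nonpos_of_map_zero hb0 _)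

/-- For `b : ℝ → ℝ` decreasing, Lipschitz, with `b 0 = 0`, the functional
`F x = -∫_𝒪 ∫₀^{x ξ} b(η) dη dξ` on `H = L²(𝒪)` satisfies `F 0 = 0`, `F ≥ 0`, its
gradient (Fréchet derivative identified via the inner product) at `x` is the function
`ξ ↦ -b (x ξ)`, and `⟨DF x, x⟩ = -∫ b (x ξ) * x ξ dξ ≥ 0`. -/
theorem stmt0
    {Ω : Type*} [MeasurableSpace Ω] (μ : Measure Ω) [IsFiniteMeasure μ]
    (b : ℝ → ℝ) (K : NNReal) (hb_lip : LipschitzWith K b)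
    (hb_mono : Antitone b) (hb0 : b 0 = 0)
    (F : Lp ℝ 2 μ → ℝ)
    (hF : ∀ x : Lp ℝ 2 μ, F x = -∫ ξ, (∫ t in (0:ℝ)..(x ξ), b t) ∂μ) :
    F 0 = 0 ∧ (∀ x, 0 ≤ F x) ∧
    ∀ x : Lp ℝ 2 μ, ∃ g : Lp ℝ 2 μ,
      (g : Ω → ℝ) =ᵐ[μ] (fun ξ => -(b (x ξ))) ∧
      HasGradientAt F g x ∧
      (inner ℝ g x : ℝ) = -∫ ξ, b (x ξ) * x ξ ∂μ ∧
      (0:ℝ) ≤ (inner ℝ g x : ℝ) :=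
  stmt0_general μ b K hb_lip hb_mono hb0 F hF
end

section
/- With the notation of the paper, for any z = (u,v) ∈ ℋ and t₂ > t₁, the adjoint of the controllability operator L^μ_{t₁,t₂} satisfies |（L^μ_{t₁,t₂})* z|²_{L²((t₁,t₂);H)} = (1/2)( |C_μ^{1/2} z|²_ℋ - |C_μ^{1/2} S_μ*(t₂-t₁) z|²_ℋ ), where C_μ(u,v) = ((-A)^{-1}Q²u, (1/μ)(-A)^{-1}Q²v). -/
/-!
Each Fourier mode `(f, g)` of `S_μ*(t) z` solves a damped oscillator whose energy
`E = μ α f² + g²` dissipates at rate `(2/μ) g²`. Integrating over `[0, T]` gives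
`∫₀ᵀ g² = (μ/2) (E(0) - E(T))`; weighting by `λ²/(μ² α²)` turns the two energies into the
`C_μ^{1/2}`-norms of the initial and terminal modes, and summing over the modes gives the
identity, the terminal series being summable as a difference of summable ones.
-/

section DampedOscillator

variable {μ a : ℝ} {f g : ℝ → ℝ}

theorem hasDerivAt_dampedEnergy (hμ : μ ≠ 0) {t : ℝ}
    (hf : HasDerivAt f (-g t / μ) t) (hg : HasDerivAt g ((μ * a * f t - g t) / μ) t) :
    HasDerivAt (fun s => μ * a * f s ^ 2 + g s ^ 2) (-(2 / μ) * g t ^ 2) t := by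
  refine (((hf.pow 2).const_mul (μ * a)).add (hg.pow 2)).congr_deriv ?_
  field_simp
  ring

theorem integral_sq_eq_dampedEnergy_sub (hμ : μ ≠ 0) (x y : ℝ)
    (hf : ∀ t, HasDerivAt f (-g t / μ) t)
    (hg : ∀ t, HasDerivAt g ((μ * a * f t - g t) / μ) t) :
    ∫ t in x..y, g t ^ 2
      = μ / 2 * ((μ * a * f x ^ 2 + g x ^ 2) - (μ * a * f y ^ 2 + g y ^ 2)) := by
  have hE : ∀ t ∈ Set.uIcc x y,
      HasDerivAt (fun s => -(μ / 2) * (μ * a * f s ^ 2 + g s ^ 2)) (g t ^ 2) t := by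
    intro t _
    refine ((hasDerivAt_dampedEnergy hμ (hf t) (hg t)).const_mul _).congr_deriv ?_
    field_simp
  have hg_cont : Continuous g := continuous_iff_continuousAt.mpr fun t => (hg t).continuousAt
  rw [intervalIntegral.integral_eq_sub_of_hasDerivAt hE ((hg_cont.pow 2).intervalIntegrable x y)]
  ring

end DampedOscillator

theorem tsum_eq_half_mul_tsum_sub_tsum {c E₀ E₁ : ℕ → ℝ} (hc : Summable c) (hE₀ : Summable E₀)
    (h : ∀ k, c k = 1 / 2 * (E₀ k - E₁ k)) :
    ∑' k, c k = 1 / 2 * (∑' k, E₀ k - ∑' k, E₁ k) := by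
  have hE₁ : E₁ = fun k => E₀ k - 2 * c k := funext fun k => by linarith [h k]
  rw [hE₁, (hE₀.hasSum.sub (hc.hasSum.mul_left 2)).tsum_eq]
  ring

theorem stmt9_general
    (μ T : ℝ) (hμ : 0 < μ)
    (a l : ℕ → ℝ)
    (u v : ℕ → ℝ) (f g : ℕ → ℝ → ℝ)
    (hf : ∀ k t, HasDerivAt (f k) (-(g k t) / μ) t)
    (hg : ∀ k t, HasDerivAt (g k) ((μ * a k * f k t - g k t) / μ) t)
    (hf0 : ∀ k, f k 0 = u k) (hg0 : ∀ k, g k 0 = v k)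
    (hsum1 : Summable fun k => (l k) ^ 2 / (a k) * (u k) ^ 2)
    (hsum2 : Summable fun k => (l k) ^ 2 / (μ * (a k) ^ 2) * (v k) ^ 2)
    (hsumI : Summable fun k => (l k) ^ 2 / (μ ^ 2 * (a k) ^ 2) * ∫ t in (0:ℝ)..T, (g k t) ^ 2) :
    ∑' k, (l k) ^ 2 / (μ ^ 2 * (a k) ^ 2) * ∫ t in (0:ℝ)..T, (g k t) ^ 2
      = (1 / 2) *
        ((∑' k, ((l k) ^ 2 / (a k) * (u k) ^ 2 + (l k) ^ 2 / (μ * (a k) ^ 2) * (v k) ^ 2))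
          - ∑' k, ((l k) ^ 2 / (a k) * (f k T) ^ 2 + (l k) ^ 2 / (μ * (a k) ^ 2) * (g k T) ^ 2)) := by
  refine tsum_eq_half_mul_tsum_sub_tsum hsumI (hsum1.add hsum2) fun k => ?_
  rw [integral_sq_eq_dampedEnergy_sub hμ.ne' 0 T (hf k) (hg k), hf0, hg0]
  field_simp

/-- the adjoint of the controllability operator satisfies
`|(L^μ_{t₁,t₂})* z|²_{L²} = (1/2)(|C_μ^{1/2} z|²_ℋ - |C_μ^{1/2} S_μ*(t₂-t₁) z|²_ℋ)`,
expressed in the eigenbasis of the Dirichlet Laplacian: the Fourier coefficients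
`(f_k, g_k)` of `S_μ*(t) z` solve `μ f_k' = -g_k`, `μ g_k' = μ α_k f_k - g_k`,
`|(L*)z|² = Σ_k (λ_k²/(μ²α_k²)) ∫₀^{T} g_k²` with `T = t₂ - t₁`, and
`|C_μ^{1/2}(u,v)|² = Σ_k (λ_k²/α_k) u_k² + (λ_k²/(μ α_k²)) v_k²`. -/
theorem stmt9
    (μ T : ℝ) (hμ : 0 < μ) (hT : 0 < T)
    (a l : ℕ → ℝ) (ha : ∀ k, 0 < a k) (hl : ∀ k, 0 < l k)
    (u v : ℕ → ℝ) (f g : ℕ → ℝ → ℝ)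
    (hf : ∀ k t, HasDerivAt (f k) (-(g k t) / μ) t)
    (hg : ∀ k t, HasDerivAt (g k) ((μ * a k * f k t - g k t) / μ) t)
    (hf0 : ∀ k, f k 0 = u k) (hg0 : ∀ k, g k 0 = v k)
    (hsum1 : Summable fun k => (l k) ^ 2 / (a k) * (u k) ^ 2)
    (hsum2 : Summable fun k => (l k) ^ 2 / (μ * (a k) ^ 2) * (v k) ^ 2)
    (hsumI : Summable fun k => (l k) ^ 2 / (μ ^ 2 * (a k) ^ 2) * ∫ t in (0:ℝ)..T, (g k t) ^ 2) :
    ∑' k, (l k) ^ 2 / (μ ^ 2 * (a k) ^ 2) * ∫ t in (0:ℝ)..T, (g k t) ^ 2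
      = (1 / 2) *
        ((∑' k, ((l k) ^ 2 / (a k) * (u k) ^ 2 + (l k) ^ 2 / (μ * (a k) ^ 2) * (v k) ^ 2))
          - ∑' k, ((l k) ^ 2 / (a k) * (f k T) ^ 2 + (l k) ^ 2 / (μ * (a k) ^ 2) * (g k T) ^ 2)) :=
  stmt9_general μ T hμ a l u v f g hf hg hf0 hg0 hsum1 hsum2 hsumI
end

section
/- Under the hypotheses of the energy identity above, and additionally assuming ⟨DF(x), x⟩_H ≥ 0 for all x, the solution φ of the damped wave equation satisfies: 2∫₀^∞ |Q^{-1}(-A)^{1/2} φ(t)|²_H dt ≤ |μQ^{-1}y + Q^{-1}x|²_H + μ|Q^{-1}(-A)^{1/2}x|²_H + 2μF(x). In particular, t ↦ |Q^{-1}(-A)^{1/2}φ(t)|_H belongs to L²(0,∞). -/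
open RealInnerProductSpace MeasureTheory

/-- under the hypotheses of the energy identity for
`μ φ'' = A φ - φ' - Q² DF(φ)` and assuming moreover `⟨DF(x), x⟩ ≥ 0` and `F ≥ 0`,
the solution satisfies `2∫₀^∞ |Q⁻¹(-A)^{1/2}φ(t)|² dt ≤ |μQ⁻¹y + Q⁻¹x|² +
μ|Q⁻¹(-A)^{1/2}x|² + 2μF(x)`; in particular `t ↦ |Q⁻¹(-A)^{1/2}φ(t)|` is in `L²(0,∞)`.
(Operators abstracted as in Statement 11; `sAQinv` stands for `Q⁻¹(-A)^{1/2} = (-A)^{1/2}Q⁻¹`.) -/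
theorem stmt12
    {H : Type*} [NormedAddCommGroup H] [InnerProductSpace ℝ H]
    (μ : ℝ) (hμ : 0 < μ)
    (A Qinv Q2inv Qsq sAQinv : H →ₗ[ℝ] H)
    (hAQ : ∀ u v, ⟪A u, Q2inv v⟫ = -⟪sAQinv u, sAQinv v⟫)
    (hQQ : ∀ u v, ⟪u, Q2inv v⟫ = ⟪Qinv u, Qinv v⟫)
    (hQsq : ∀ u v, ⟪Qsq u, Q2inv v⟫ = ⟪u, v⟫)
    (F : H → ℝ) (DF : H → H)
    (hFpos : ∀ u, 0 ≤ F u) (hF0 : F 0 = 0)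
    (hDFx : ∀ u, 0 ≤ ⟪DF u, u⟫)
    (φ φ' φ'' : ℝ → H) (x y : H) (hx : φ 0 = x) (hy : φ' 0 = y)
    (hd1 : ∀ t, HasDerivAt φ (φ' t) t)
    (hd2 : ∀ t, HasDerivAt φ' (φ'' t) t)
    (hder_sA : ∀ t, HasDerivAt (fun s => ‖sAQinv (φ s)‖ ^ 2)
      (2 * ⟪sAQinv (φ t), sAQinv (φ' t)⟫) t)
    (hder_F : ∀ t, HasDerivAt (fun s => F (φ s)) (⟪DF (φ t), φ' t⟫) t)
    (hder_mix : ∀ t, HasDerivAt (fun s => ‖Qinv (μ • φ' s + φ s)‖ ^ 2)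
      (2 * ⟪Qinv (μ • φ' t + φ t), Qinv (μ • φ'' t + φ' t)⟫) t)
    (heq : ∀ t ≥ (0:ℝ), μ • φ'' t = A (φ t) - φ' t - Qsq (DF (φ t))) :
    IntegrableOn (fun t => ‖sAQinv (φ t)‖ ^ 2) (Set.Ioi (0:ℝ)) volume ∧
    2 * ∫ t in Set.Ioi (0:ℝ), ‖sAQinv (φ t)‖ ^ 2
      ≤ ‖μ • Qinv y + Qinv x‖ ^ 2 + μ * ‖sAQinv x‖ ^ 2 + 2 * μ * F x := by
  set g : ℝ → ℝ := fun t => ‖sAQinv (φ t)‖ ^ 2 with hg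
  set E : ℝ → ℝ := fun t =>
    ‖Qinv (μ • φ' t + φ t)‖ ^ 2 + μ * ‖sAQinv (φ t)‖ ^ 2 + 2 * μ * F (φ t) with hE
  have hgnn : ∀ t, 0 ≤ g t := fun t => sq_nonneg _
  have hEnn : ∀ t, 0 ≤ E t := by
    intro t
    have h0 := hFpos (φ t)
    have h1 : (0:ℝ) ≤ ‖Qinv (μ • φ' t + φ t)‖ ^ 2 := sq_nonneg _
    have h2 : (0:ℝ) ≤ μ * ‖sAQinv (φ t)‖ ^ 2 := by positivity
    have h3 : (0:ℝ) ≤ 2 * μ * F (φ t) := by positivity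
    simp only [hE]; linarith
  have hEd : ∀ t, HasDerivAt E
      (2 * ⟪Qinv (μ • φ' t + φ t), Qinv (μ • φ'' t + φ' t)⟫
        + μ * (2 * ⟪sAQinv (φ t), sAQinv (φ' t)⟫)
        + 2 * μ * ⟪DF (φ t), φ' t⟫) t := fun t =>
    ((hder_mix t).add ((hder_sA t).const_mul μ)).add ((hder_F t).const_mul (2*μ))
  have hgcont : Continuous g := by
    rw [continuous_iff_continuousAt]
    exact fun t => (hder_sA t).continuousAt
  -- key identity for t ≥ 0
  have hkey : ∀ t ≥ (0:ℝ),
      2 * ⟪Qinv (μ • φ' t + φ t), Qinv (μ • φ'' t + φ' t)⟫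
        + μ * (2 * ⟪sAQinv (φ t), sAQinv (φ' t)⟫)
        + 2 * μ * ⟪DF (φ t), φ' t⟫
      = -2 * g t - 2 * ⟪DF (φ t), φ t⟫ := by
    intro t ht
    have hb : μ • φ'' t + φ' t = A (φ t) - Qsq (DF (φ t)) := by
      rw [heq t ht]; abel
    have h1 : ⟪Qinv (μ • φ' t + φ t), Qinv (μ • φ'' t + φ' t)⟫
        = ⟪μ • φ'' t + φ' t, Q2inv (μ • φ' t + φ t)⟫ := by
      rw [hQQ, real_inner_comm]
    have h2 : ⟪μ • φ'' t + φ' t, Q2inv (μ • φ' t + φ t)⟫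
        = -(μ * ⟪sAQinv (φ t), sAQinv (φ' t)⟫ + ‖sAQinv (φ t)‖ ^ 2)
          - (μ * ⟪DF (φ t), φ' t⟫ + ⟪DF (φ t), φ t⟫) := by
      rw [hb, inner_sub_left, hAQ, hQsq]
      have hs : sAQinv (μ • φ' t + φ t) = μ • sAQinv (φ' t) + sAQinv (φ t) := by
        rw [map_add, LinearMap.map_smul]
      rw [hs, inner_add_right, real_inner_smul_right,
        real_inner_self_eq_norm_sq, inner_add_right, real_inner_smul_right]
    rw [h1, h2, hg]; ring
  have h2gcont : Continuous (fun s => 2 * g s) := continuous_const.mul hgcont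
  set ψ : ℝ → ℝ := fun T => E T + ∫ s in (0:ℝ)..T, 2 * g s with hψ
  have hψd : ∀ t, HasDerivAt ψ
      (2 * ⟪Qinv (μ • φ' t + φ t), Qinv (μ • φ'' t + φ' t)⟫
        + μ * (2 * ⟪sAQinv (φ t), sAQinv (φ' t)⟫)
        + 2 * μ * ⟪DF (φ t), φ' t⟫ + 2 * g t) t := fun t =>
    (hEd t).add ((h2gcont.integral_hasStrictDerivAt 0 t).hasDerivAt)
  -- ψ is antitone on [0,∞)
  have hanti : AntitoneOn ψ (Set.Ici (0:ℝ)) := by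
    apply antitoneOn_of_deriv_nonpos (convex_Ici 0)
    · exact fun t _ => ((hψd t).continuousAt).continuousWithinAt
    · intro t ht
      exact ((hψd t).differentiableAt).differentiableWithinAt
    · intro t ht
      rw [interior_Ici] at ht
      rw [(hψd t).deriv, hkey t (le_of_lt ht)]
      have := hDFx (φ t)
      linarith
  have hψ0 : ψ 0 = E 0 := by simp [hψ]
  have hbound : ∀ T ≥ (0:ℝ), ∫ s in (0:ℝ)..T, 2 * g s ≤ E 0 := by
    intro T hT
    have h := hanti (Set.self_mem_Ici) (Set.mem_Ici.mpr hT) hT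
    rw [hψ0] at h
    have := hEnn T
    simp only [hψ] at h
    linarith
  have hbound' : ∀ T ≥ (0:ℝ), ∫ s in (0:ℝ)..T, g s ≤ E 0 / 2 := by
    intro T hT
    have h2 : (2:ℝ) * ∫ s in (0:ℝ)..T, g s ≤ E 0 := by
      rw [← intervalIntegral.integral_const_mul]
      exact hbound T hT
    have : (∫ s in (0:ℝ)..T, g s) = (2 * ∫ s in (0:ℝ)..T, g s) / 2 := by ring
    rw [this]
    exact div_le_div_of_nonneg_right h2 (by norm_num)
  -- integrability on Ioi 0
  have hint : IntegrableOn g (Set.Ioi (0:ℝ)) volume := by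
    apply MeasureTheory.integrableOn_Ioi_of_intervalIntegral_norm_bounded
      (E 0 / 2) 0 (fun i : ℕ => (hgcont.intervalIntegrable 0 i).1)
      tendsto_natCast_atTop_atTop
    filter_upwards with n
    have : ∀ s, ‖g s‖ = g s := fun s => Real.norm_of_nonneg (hgnn s)
    simp_rw [this]
    exact hbound' n (Nat.cast_nonneg n)
  refine ⟨hint, ?_⟩
  -- value of the integral
  have htend : Filter.Tendsto (fun n : ℕ => ∫ s in (0:ℝ)..n, g s) Filter.atTop
      (nhds (∫ t in Set.Ioi (0:ℝ), g t)) :=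
    MeasureTheory.intervalIntegral_tendsto_integral_Ioi 0 hint tendsto_natCast_atTop_atTop
  have hle : (∫ t in Set.Ioi (0:ℝ), g t) ≤ E 0 / 2 :=
    le_of_tendsto htend (Filter.Eventually.of_forall fun n => hbound' n (Nat.cast_nonneg n))
  have hE0 : E 0 = ‖μ • Qinv y + Qinv x‖ ^ 2 + μ * ‖sAQinv x‖ ^ 2 + 2 * μ * F x := by
    simp only [hE, hx, hy, map_add, LinearMap.map_smul]
  have hfin : (2:ℝ) * ∫ t in Set.Ioi (0:ℝ), g t ≤ E 0 := by
    calc (2:ℝ) * ∫ t in Set.Ioi (0:ℝ), g t ≤ 2 * (E 0 / 2) :=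
          mul_le_mul_of_nonneg_left hle (by norm_num)
      _ = E 0 := by ring
  rw [← hE0]
  exact hfin
end

section
/- For any μ > 0 and any path z ∈ C((-∞,0];ℋ) with z(0) = (x,y), lim_{t→-∞}|C_μ^{-1/2}z(t)|_ℋ = 0, and finite action I^μ_{-∞}(z) = (1/2)∫_{-∞}^0 |Q^{-1}(μφ''(t) + φ'(t) - Aφ(t) + Q²DF(φ(t)))|²_H dt where φ = Π₁z, one has the lower bound I^μ_{-∞}(z) ≥ |(-A)^{1/2}Q^{-1}x|²_H + 2F(x) + μ|Q^{-1}y|²_H. -/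
open RealInnerProductSpace MeasureTheory Filter Set Topology

/-!
The energy `E(t) = μ‖Q⁻¹φ'(t)‖² + ‖(-A)^{1/2}Q⁻¹φ(t)‖² + 2F(φ(t))` has derivative twice the
cross term `⟪Q⁻¹φ', Q⁻¹(μφ'' - Aφ) + QDF(φ)⟫`. Writing the integrand as `‖a + w‖²` with
`w = Q⁻¹φ'`, the cross term is `⟪w, a⟫`, and `4⟪w, a⟫ ≤ ‖a + w‖²`. Integrating over `(-∞, 0]`
and using `E → 0` at `-∞` gives `2E(0) ≤ ∫ ‖a + w‖²`. Here `sAQinv`, `Qinv`, `Qsq`, `Q2inv`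
stand for `(-A)^{1/2}Q⁻¹`, `Q⁻¹`, `Q²`, `Q⁻²`.
-/

lemma four_mul_inner_le_norm_add_sq {E : Type*} [NormedAddCommGroup E] [InnerProductSpace ℝ E]
    (a w : E) : 4 * ⟪w, a⟫ ≤ ‖a + w‖ ^ 2 := by
  rw [norm_add_sq_real, real_inner_comm]
  nlinarith [norm_sub_sq_real a w, sq_nonneg ‖a - w‖]

lemma sub_le_setIntegral_Iic_of_hasDerivAt_of_le {g g' f : ℝ → ℝ} {a m : ℝ}
    (hderiv : ∀ t ∈ Iic a, HasDerivAt g (g' t) t) (hg' : IntegrableOn g' (Iic a))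
    (hlim : Tendsto g atBot (𝓝 m)) (hf : IntegrableOn f (Iic a))
    (hle : ∀ t ∈ Iic a, g' t ≤ f t) :
    g a - m ≤ ∫ t in Iic a, f t := by
  rw [← integral_Iic_of_hasDerivAt_of_tendsto' hderiv hg' hlim]
  exact setIntegral_mono_on hg' hf measurableSet_Iic hle

section Action

variable {H : Type*} [NormedAddCommGroup H] [InnerProductSpace ℝ H]

lemma inner_Qinv_add_Q_eq {A Q Qinv Q2inv sAQinv : H →ₗ[ℝ] H}
    (hAQ : ∀ u v, ⟪A u, Q2inv v⟫ = -⟪sAQinv u, sAQinv v⟫)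
    (hQQ : ∀ u v, ⟪u, Q2inv v⟫ = ⟪Qinv u, Qinv v⟫)
    (hQpair : ∀ u v, ⟪Qinv u, Q v⟫ = ⟪u, v⟫) (μ : ℝ) (u v p d : H) :
    ⟪Qinv v, Qinv (μ • p - A u) + Q d⟫
      = μ * ⟪Qinv v, Qinv p⟫ + ⟪sAQinv u, sAQinv v⟫ + ⟪d, v⟫ := by
  have hA : ⟪Qinv v, Qinv (A u)⟫ = -⟪sAQinv u, sAQinv v⟫ := by
    rw [real_inner_comm, ← hQQ, hAQ]
  rw [inner_add_right, map_sub, map_smul, inner_sub_right, inner_smul_right, hA, hQpair,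
    real_inner_comm d]
  ring

lemma four_mul_inner_Qinv_add_Q_le {A Q Qinv Q2inv Qsq : H →ₗ[ℝ] H}
    (hQQ : ∀ u v, ⟪u, Q2inv v⟫ = ⟪Qinv u, Qinv v⟫)
    (hQsq : ∀ u v, ⟪Qsq u, Q2inv v⟫ = ⟪u, v⟫)
    (hQpair : ∀ u v, ⟪Qinv u, Q v⟫ = ⟪u, v⟫) (μ : ℝ) (u v p d : H) :
    4 * ⟪Qinv v, Qinv (μ • p - A u) + Q d⟫ ≤ ‖Qinv (μ • p + v - A u + Qsq d)‖ ^ 2 := by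
  have hsplit : Qinv (μ • p + v - A u + Qsq d) = (Qinv (μ • p - A u) + Qinv (Qsq d)) + Qinv v := by
    simp only [map_add, map_sub]
    abel
  have hQsqQ : ⟪Qinv v, Qinv (Qsq d)⟫ = ⟪Qinv v, Q d⟫ := by
    rw [real_inner_comm, ← hQQ, hQsq, hQpair, real_inner_comm]
  rw [hsplit, inner_add_right, ← hQsqQ, ← inner_add_right]
  exact four_mul_inner_le_norm_add_sq _ _

lemma hasDerivAt_energy {A Q Qinv Q2inv sAQinv : H →ₗ[ℝ] H}
    (hAQ : ∀ u v, ⟪A u, Q2inv v⟫ = -⟪sAQinv u, sAQinv v⟫)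
    (hQQ : ∀ u v, ⟪u, Q2inv v⟫ = ⟪Qinv u, Qinv v⟫)
    (hQpair : ∀ u v, ⟪Qinv u, Q v⟫ = ⟪u, v⟫) (μ : ℝ) {F : H → ℝ} {DF : H → H}
    {φ φ' φ'' : ℝ → H} {t : ℝ}
    (hder_sA : HasDerivAt (fun s => ‖sAQinv (φ s)‖ ^ 2) (2 * ⟪sAQinv (φ t), sAQinv (φ' t)⟫) t)
    (hder_Q : HasDerivAt (fun s => ‖Qinv (φ' s)‖ ^ 2) (2 * ⟪Qinv (φ' t), Qinv (φ'' t)⟫) t)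
    (hder_F : HasDerivAt (fun s => F (φ s)) (⟪DF (φ t), φ' t⟫) t) :
    HasDerivAt (fun s => μ * ‖Qinv (φ' s)‖ ^ 2 + ‖sAQinv (φ s)‖ ^ 2 + 2 * F (φ s))
      (2 * ⟪Qinv (φ' t), Qinv (μ • φ'' t - A (φ t)) + Q (DF (φ t))⟫) t := by
  refine (((hder_Q.const_mul μ).add hder_sA).add (hder_F.const_mul 2)).congr_deriv ?_
  rw [inner_Qinv_add_Q_eq hAQ hQQ hQpair]
  ring

lemma tendsto_energy_atBot {Qinv sAQinv : H →ₗ[ℝ] H} (μ : ℝ) {F : H → ℝ} {φ φ' : ℝ → H}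
    (hdecay : Tendsto (fun t => ‖sAQinv (φ t)‖ + ‖Qinv (φ' t)‖) atBot (𝓝 0))
    (hFlim : Tendsto (fun t => F (φ t)) atBot (𝓝 0)) :
    Tendsto (fun t => μ * ‖Qinv (φ' t)‖ ^ 2 + ‖sAQinv (φ t)‖ ^ 2 + 2 * F (φ t)) atBot (𝓝 0) := by
  have hsA : Tendsto (fun t => ‖sAQinv (φ t)‖) atBot (𝓝 0) :=
    squeeze_zero (fun _ => norm_nonneg _)
      (fun _ => le_add_of_nonneg_right (norm_nonneg _)) hdecay
  have hQ : Tendsto (fun t => ‖Qinv (φ' t)‖) atBot (𝓝 0) :=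
    squeeze_zero (fun _ => norm_nonneg _)
      (fun _ => le_add_of_nonneg_left (norm_nonneg _)) hdecay
  simpa using (((hQ.pow 2).const_mul μ).add (hsA.pow 2)).add (hFlim.const_mul 2)

end Action

theorem stmt14_general
    {H : Type*} [NormedAddCommGroup H] [InnerProductSpace ℝ H]
    (μ : ℝ)
    (A Q Qinv Q2inv Qsq sAQinv : H →ₗ[ℝ] H)
    (hAQ : ∀ u v, ⟪A u, Q2inv v⟫ = -⟪sAQinv u, sAQinv v⟫)
    (hQQ : ∀ u v, ⟪u, Q2inv v⟫ = ⟪Qinv u, Qinv v⟫)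
    (hQsq : ∀ u v, ⟪Qsq u, Q2inv v⟫ = ⟪u, v⟫)
    (hQpair : ∀ u v, ⟪Qinv u, Q v⟫ = ⟪u, v⟫)
    (F : H → ℝ) (DF : H → H)
    (φ φ' φ'' : ℝ → H) (x y : H) (hx : φ 0 = x) (hy : φ' 0 = y)
    (hder_sA : ∀ t, HasDerivAt (fun s => ‖sAQinv (φ s)‖ ^ 2)
      (2 * ⟪sAQinv (φ t), sAQinv (φ' t)⟫) t)
    (hder_Q : ∀ t, HasDerivAt (fun s => ‖Qinv (φ' s)‖ ^ 2)
      (2 * ⟪Qinv (φ' t), Qinv (φ'' t)⟫) t)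
    (hder_F : ∀ t, HasDerivAt (fun s => F (φ s)) (⟪DF (φ t), φ' t⟫) t)
    (hdecay : Tendsto (fun t => ‖sAQinv (φ t)‖ + ‖Qinv (φ' t)‖) atBot (nhds 0))
    (hFlim : Tendsto (fun t => F (φ t)) atBot (nhds 0))
    (haction : IntegrableOn
      (fun t => ‖Qinv (μ • φ'' t + φ' t - A (φ t) + Qsq (DF (φ t)))‖ ^ 2)
      (Set.Iic (0:ℝ)) volume)
    (hcross : IntegrableOn
      (fun t => ⟪Qinv (φ' t), Qinv (μ • φ'' t - A (φ t)) + Q (DF (φ t))⟫)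
      (Set.Iic (0:ℝ)) volume) :
    ‖sAQinv x‖ ^ 2 + 2 * F x + μ * ‖Qinv y‖ ^ 2
      ≤ (1 / 2) * ∫ t in Set.Iic (0:ℝ),
          ‖Qinv (μ • φ'' t + φ' t - A (φ t) + Qsq (DF (φ t)))‖ ^ 2 := by
  have hE := sub_le_setIntegral_Iic_of_hasDerivAt_of_le
    (g := fun t => 2 * (μ * ‖Qinv (φ' t)‖ ^ 2 + ‖sAQinv (φ t)‖ ^ 2 + 2 * F (φ t)))
    (fun t _ =>
      (hasDerivAt_energy hAQ hQQ hQpair μ (hder_sA t) (hder_Q t) (hder_F t)).const_mul 2)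
    ((hcross.const_mul 2).const_mul 2)
    (by simpa using (tendsto_energy_atBot μ hdecay hFlim).const_mul 2)
    haction (fun t _ => by
      linarith [four_mul_inner_Qinv_add_Q_le (A := A) hQQ hQsq hQpair μ (φ t) (φ' t) (φ'' t)
        (DF (φ t))])
  rw [hx, hy] at hE
  linarith

/-- lower bound for the action. For a path `z = (φ, φ')` on `(-∞,0]` with
`z(0) = (x,y)` and decay at `-∞` (expressed, as in the paper, through
`|(-A)^{1/2}Q⁻¹φ(t)| + |Q⁻¹φ'(t)| → 0`, which in particular gives `F(φ(t)) → 0`), the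
action `I^μ_{-∞}(z) = (1/2)∫_{-∞}^0 |Q⁻¹(μφ'' + φ' - Aφ + Q²DF(φ))|² dt` satisfies
`I^μ_{-∞}(z) ≥ |(-A)^{1/2}Q⁻¹x|² + 2F(x) + μ|Q⁻¹y|²`.
(Operators abstracted as in Statements 11 and 13.) -/
theorem stmt14
    {H : Type*} [NormedAddCommGroup H] [InnerProductSpace ℝ H]
    (μ : ℝ) (hμ : 0 < μ)
    (A Q Qinv Q2inv Qsq sAQinv : H →ₗ[ℝ] H)
    (hAQ : ∀ u v, ⟪A u, Q2inv v⟫ = -⟪sAQinv u, sAQinv v⟫)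
    (hQQ : ∀ u v, ⟪u, Q2inv v⟫ = ⟪Qinv u, Qinv v⟫)
    (hQsq : ∀ u v, ⟪Qsq u, Q2inv v⟫ = ⟪u, v⟫)
    (hQpair : ∀ u v, ⟪Qinv u, Q v⟫ = ⟪u, v⟫)
    (F : H → ℝ) (DF : H → H) (hF0 : F 0 = 0)
    (φ φ' φ'' : ℝ → H) (x y : H) (hx : φ 0 = x) (hy : φ' 0 = y)
    (hd1 : ∀ t, HasDerivAt φ (φ' t) t)
    (hd2 : ∀ t, HasDerivAt φ' (φ'' t) t)
    (hder_sA : ∀ t, HasDerivAt (fun s => ‖sAQinv (φ s)‖ ^ 2)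
      (2 * ⟪sAQinv (φ t), sAQinv (φ' t)⟫) t)
    (hder_Q : ∀ t, HasDerivAt (fun s => ‖Qinv (φ' s)‖ ^ 2)
      (2 * ⟪Qinv (φ' t), Qinv (φ'' t)⟫) t)
    (hder_F : ∀ t, HasDerivAt (fun s => F (φ s)) (⟪DF (φ t), φ' t⟫) t)
    (hdecay : Tendsto (fun t => ‖sAQinv (φ t)‖ + ‖Qinv (φ' t)‖) atBot (nhds 0))
    (hFlim : Tendsto (fun t => F (φ t)) atBot (nhds 0))
    (haction : IntegrableOn
      (fun t => ‖Qinv (μ • φ'' t + φ' t - A (φ t) + Qsq (DF (φ t)))‖ ^ 2)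
      (Set.Iic (0:ℝ)) volume)
    (hcross : IntegrableOn
      (fun t => ⟪Qinv (φ' t), Qinv (μ • φ'' t - A (φ t)) + Q (DF (φ t))⟫)
      (Set.Iic (0:ℝ)) volume) :
    ‖sAQinv x‖ ^ 2 + 2 * F x + μ * ‖Qinv y‖ ^ 2
      ≤ (1 / 2) * ∫ t in Set.Iic (0:ℝ),
          ‖Qinv (μ • φ'' t + φ' t - A (φ t) + Qsq (DF (φ t)))‖ ^ 2 :=
  stmt14_general μ A Q Qinv Q2inv Qsq sAQinv hAQ hQQ hQsq hQpair F DF φ φ' φ'' x y hx hy hder_sA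
    hder_Q hder_F hdecay hFlim haction hcross
end

section
/- If φ solves the backward-in-time reversed equation obtained by setting φ̂(t) = φ̃(-t) where φ̃ solves μφ̃'' = Aφ̃ - φ̃' - Q²DF(φ̃) with φ̃(0) = x, φ̃'(0) = -y, then φ̂ satisfies μφ̂''(t) = Aφ̂(t) + φ̂'(t) - Q²DF(φ̂(t)) with φ̂(0) = x, φ̂'(0) = y, and its action equals exactly I^μ_{-∞}(φ̂) = |(-A)^{1/2}Q^{-1}x|²_H + 2F(x) + μ|Q^{-1}y|²_H. -/
open RealInnerProductSpace MeasureTheory Filter Set Topology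

/-!
Along a solution of the damped equation `μφ̃'' = Aφ̃ - φ̃' - Q²DF(φ̃)` the energy
`|(-A)^{1/2}Q⁻¹φ̃|² + 2F(φ̃) + μ|Q⁻¹φ̃'|²` decreases at rate exactly `2|Q⁻¹φ̃'|²` and tends to `0`
at `+∞`, so the total dissipation over `[0, ∞)` is the initial energy. For the reversed path
`φ̂(t) = φ̃(-t)` the residual `μφ̂'' + φ̂' - Aφ̂ + Q²DF(φ̂)` is `2φ̂'`, so the action
`½∫|2Q⁻¹φ̂'|²` is exactly that total dissipation.
-/

theorem HasDerivAt.comp_neg {E : Type*} [NormedAddCommGroup E] [NormedSpace ℝ E] {f : ℝ → E}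
    {f' : E} {t : ℝ} (h : HasDerivAt f f' (-t)) : HasDerivAt (fun s => f (-s)) (-f') t := by
  simpa [Function.comp_def] using h.scomp t (hasDerivAt_neg t)

theorem integral_Iic_comp_neg_eq_of_hasDerivAt_neg {g k : ℝ → ℝ}
    (hg : ∀ t, 0 ≤ t → HasDerivAt g (-k t) t)
    (hk : IntegrableOn (fun t => k (-t)) (Iic 0)) (hlim : Tendsto g atTop (𝓝 0)) :
    ∫ t in Iic (0 : ℝ), k (-t) = g 0 := by
  have hderiv : ∀ t ∈ Iic (0 : ℝ), HasDerivAt (fun s => g (-s)) (k (-t)) t := fun t ht => by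
    simpa using (hg (-t) (neg_nonneg.mpr ht)).comp_neg
  simpa using integral_Iic_of_hasDerivAt_of_tendsto' hderiv hk
    (hlim.comp tendsto_neg_atBot_atTop)

section Dissipation

variable {H : Type*} [NormedAddCommGroup H] [InnerProductSpace ℝ H]
  {A Qinv Q2inv Qsq sAQinv : H →ₗ[ℝ] H}

theorem energy_rate_eq_neg_norm_sq (μ : ℝ)
    (hAQ : ∀ u v, ⟪A u, Q2inv v⟫ = -⟪sAQinv u, sAQinv v⟫)
    (hQQ : ∀ u v, ⟪u, Q2inv v⟫ = ⟪Qinv u, Qinv v⟫)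
    (hQsq : ∀ u v, ⟪Qsq u, Q2inv v⟫ = ⟪u, v⟫)
    (DF : H → H) {p v a : H} (h : μ • a = A p - v - Qsq (DF p)) :
    ⟪sAQinv p, sAQinv v⟫ + ⟪DF p, v⟫ + μ * ⟪Qinv v, Qinv a⟫ = -‖Qinv v‖ ^ 2 := by
  have hμa : μ * ⟪Qinv v, Qinv a⟫ = ⟪μ • a, Q2inv v⟫ := by
    rw [hQQ, map_smul, real_inner_smul_left, real_inner_comm]
  rw [hμa, h, inner_sub_left, inner_sub_left, hAQ, hQsq, hQQ, real_inner_self_eq_norm_sq]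
  ring

theorem norm_sq_reversed_residual (μ : ℝ) (DF : H → H) {p v a : H}
    (h : μ • a = A p - v - Qsq (DF p)) :
    ‖Qinv (μ • a + -v - A p + Qsq (DF p))‖ ^ 2 = 4 * ‖Qinv v‖ ^ 2 := by
  have hres : μ • a + -v - A p + Qsq (DF p) = (-2 : ℝ) • v := by
    rw [h]
    module
  rw [hres, map_smul, norm_smul]
  norm_num [mul_pow]

end Dissipation

theorem stmt16_general
    {H : Type*} [NormedAddCommGroup H] [InnerProductSpace ℝ H]
    (μ : ℝ)
    (A Qinv Q2inv Qsq sAQinv : H →ₗ[ℝ] H)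
    (hAQ : ∀ u v, ⟪A u, Q2inv v⟫ = -⟪sAQinv u, sAQinv v⟫)
    (hQQ : ∀ u v, ⟪u, Q2inv v⟫ = ⟪Qinv u, Qinv v⟫)
    (hQsq : ∀ u v, ⟪Qsq u, Q2inv v⟫ = ⟪u, v⟫)
    (F : H → ℝ) (DF : H → H)
    (φt φt' φt'' : ℝ → H) (x y : H)
    (hx : φt 0 = x) (hy : φt' 0 = -y)
    (hd1 : ∀ t, HasDerivAt φt (φt' t) t)
    (hd2 : ∀ t, HasDerivAt φt' (φt'' t) t)
    (heq : ∀ t ≥ (0:ℝ), μ • φt'' t = A (φt t) - φt' t - Qsq (DF (φt t)))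
    (hdecay : Tendsto (fun t => ‖sAQinv (φt t)‖ + ‖Qinv (φt' t)‖) atTop (nhds 0))
    (hFlim : Tendsto (fun t => F (φt t)) atTop (nhds 0))
    (hder_sA : ∀ t, HasDerivAt (fun s => ‖sAQinv (φt s)‖ ^ 2)
      (2 * ⟪sAQinv (φt t), sAQinv (φt' t)⟫) t)
    (hder_Q : ∀ t, HasDerivAt (fun s => ‖Qinv (φt' s)‖ ^ 2)
      (2 * ⟪Qinv (φt' t), Qinv (φt'' t)⟫) t)
    (hder_F : ∀ t, HasDerivAt (fun s => F (φt s)) (⟪DF (φt t), φt' t⟫) t)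
    (hint : IntegrableOn (fun t => ‖Qinv (φt' (-t))‖ ^ 2) (Set.Iic (0:ℝ)) volume) :
    (∀ t, HasDerivAt (fun s => φt (-s)) (-(φt' (-t))) t) ∧
    (∀ t, HasDerivAt (fun s => -(φt' (-s))) (φt'' (-t)) t) ∧
    (∀ t ≤ (0:ℝ), μ • φt'' (-t)
      = A (φt (-t)) + (-(φt' (-t))) - Qsq (DF (φt (-t)))) ∧
    φt (-(0:ℝ)) = x ∧ -(φt' (-(0:ℝ))) = y ∧
    (1 / 2) * ∫ t in Set.Iic (0:ℝ),
        ‖Qinv (μ • φt'' (-t) + (-(φt' (-t))) - A (φt (-t)) + Qsq (DF (φt (-t))))‖ ^ 2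
      = ‖sAQinv x‖ ^ 2 + 2 * F x + μ * ‖Qinv y‖ ^ 2 := by
  have heq_rev : ∀ t ≤ (0:ℝ),
      μ • φt'' (-t) = A (φt (-t)) - φt' (-t) - Qsq (DF (φt (-t))) :=
    fun t ht => heq (-t) (neg_nonneg.mpr ht)
  refine ⟨fun t => (hd1 (-t)).comp_neg,
    fun t => by simpa [Pi.neg_def] using (hd2 (-t)).comp_neg.neg,
    fun t ht => by rw [heq_rev t ht]; abel, by simpa using hx, by simp [hy], ?_⟩
  set E : ℝ → ℝ := fun t => ‖sAQinv (φt t)‖ ^ 2 + 2 * F (φt t) + μ * ‖Qinv (φt' t)‖ ^ 2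
  have hE_deriv : ∀ t, 0 ≤ t → HasDerivAt E (-(2 * ‖Qinv (φt' t)‖ ^ 2)) t := fun t ht => by
    refine (((hder_sA t).add ((hder_F t).const_mul 2)).add
      ((hder_Q t).const_mul μ)).congr_deriv ?_
    linear_combination 2 * energy_rate_eq_neg_norm_sq μ hAQ hQQ hQsq DF (heq t ht)
  have hE_lim : Tendsto E atTop (𝓝 0) := by
    have hsA := squeeze_zero (fun _ => norm_nonneg _)
      (fun _ => le_add_of_nonneg_right (norm_nonneg _)) hdecay
    have hQ := squeeze_zero (fun _ => norm_nonneg _)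
      (fun _ => le_add_of_nonneg_left (norm_nonneg _)) hdecay
    simpa using ((hsA.pow 2).add (hFlim.const_mul 2)).add ((hQ.pow 2).const_mul μ)
  have hdissip : ∫ t in Iic (0 : ℝ), 2 * ‖Qinv (φt' (-t))‖ ^ 2 = E 0 :=
    integral_Iic_comp_neg_eq_of_hasDerivAt_neg hE_deriv (hint.const_mul 2) hE_lim
  rw [setIntegral_congr_fun measurableSet_Iic
    (fun t ht => norm_sq_reversed_residual μ DF (heq_rev t ht))]
  simp only [E, hx, hy, map_neg, norm_neg] at hdissip
  rw [← hdissip, integral_const_mul, integral_const_mul]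
  ring

/-- time reversal realizes the quasi-potential. If `φ̃` solves
`μφ̃'' = Aφ̃ - φ̃' - Q²DF(φ̃)`, `φ̃(0) = x`, `φ̃'(0) = -y`, and (by the go-to-zero
lemma) `|(-A)^{1/2}Q⁻¹φ̃(t)| + |Q⁻¹φ̃'(t)| → 0` as `t → +∞` (so that also
`F(φ̃(t)) → F(0) = 0`), then `φ̂(t) := φ̃(-t)` satisfies
`μφ̂'' = Aφ̂ + φ̂' - Q²DF(φ̂)` with `φ̂(0) = x`, `φ̂'(0) = y`, and its action equals
`I^μ_{-∞}(φ̂) = |(-A)^{1/2}Q⁻¹x|² + 2F(x) + μ|Q⁻¹y|²`.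
(Operators abstracted as in Statement 11.) -/
theorem stmt16
    {H : Type*} [NormedAddCommGroup H] [InnerProductSpace ℝ H]
    (μ : ℝ) (hμ : 0 < μ)
    (A Qinv Q2inv Qsq sAQinv : H →ₗ[ℝ] H)
    (hAQ : ∀ u v, ⟪A u, Q2inv v⟫ = -⟪sAQinv u, sAQinv v⟫)
    (hQQ : ∀ u v, ⟪u, Q2inv v⟫ = ⟪Qinv u, Qinv v⟫)
    (hQsq : ∀ u v, ⟪Qsq u, Q2inv v⟫ = ⟪u, v⟫)
    (F : H → ℝ) (DF : H → H) (hF0 : F 0 = 0)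
    (φt φt' φt'' : ℝ → H) (x y : H)
    (hx : φt 0 = x) (hy : φt' 0 = -y)
    (hd1 : ∀ t, HasDerivAt φt (φt' t) t)
    (hd2 : ∀ t, HasDerivAt φt' (φt'' t) t)
    (heq : ∀ t ≥ (0:ℝ), μ • φt'' t = A (φt t) - φt' t - Qsq (DF (φt t)))
    (hdecay : Tendsto (fun t => ‖sAQinv (φt t)‖ + ‖Qinv (φt' t)‖) atTop (nhds 0))
    (hFlim : Tendsto (fun t => F (φt t)) atTop (nhds 0))
    (hder_sA : ∀ t, HasDerivAt (fun s => ‖sAQinv (φt s)‖ ^ 2)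
      (2 * ⟪sAQinv (φt t), sAQinv (φt' t)⟫) t)
    (hder_Q : ∀ t, HasDerivAt (fun s => ‖Qinv (φt' s)‖ ^ 2)
      (2 * ⟪Qinv (φt' t), Qinv (φt'' t)⟫) t)
    (hder_F : ∀ t, HasDerivAt (fun s => F (φt s)) (⟪DF (φt t), φt' t⟫) t)
    (hint : IntegrableOn (fun t => ‖Qinv (φt' (-t))‖ ^ 2) (Set.Iic (0:ℝ)) volume) :
    (∀ t, HasDerivAt (fun s => φt (-s)) (-(φt' (-t))) t) ∧
    (∀ t, HasDerivAt (fun s => -(φt' (-s))) (φt'' (-t)) t) ∧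
    (∀ t ≤ (0:ℝ), μ • φt'' (-t)
      = A (φt (-t)) + (-(φt' (-t))) - Qsq (DF (φt (-t)))) ∧
    φt (-(0:ℝ)) = x ∧ -(φt' (-(0:ℝ))) = y ∧
    (1 / 2) * ∫ t in Set.Iic (0:ℝ),
        ‖Qinv (μ • φt'' (-t) + (-(φt' (-t))) - A (φt (-t)) + Qsq (DF (φt (-t))))‖ ^ 2
      = ‖sAQinv x‖ ^ 2 + 2 * F x + μ * ‖Qinv y‖ ^ 2 :=
  stmt16_general μ A Qinv Q2inv Qsq sAQinv hAQ hQQ hQsq F DF φt φt' φt'' x y hx hy hd1 hd2 heq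
    hdecay hFlim hder_sA hder_Q hder_F hint
end
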